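/- A point x₀ is a tropical root of order at least k if and only if the polynomial factors by the k-th tropical power of "x + x₀": let d ≥ 1, 1 ≤ k ≤ d, a : {0,…,d} → ℝ, P(x) = max_{0≤i≤d}(a_i + i·x), and x₀ ∈ ℝ. Then the following are equivalent: (1) there exist indices i < j with j − i ≥ k such that a_i + i·x₀ = a_j + j·x₀ = P(x₀); (2) there exist b₀,…,b_{d−k} ∈ ℝ such that for all x ∈ ℝ, P(x) = k·max(x, x₀) + max_{0≤j≤d−k}(b_j + j·x). -/

import Mathlib

/-!
If the maximum at `x₀` is attained by indices `i` and `j` with `i + k ≤ j`, then for `x ≥ x₀`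
every term of index `m + k ≤ j` may be raised by `k (x - x₀)`, and for `x ≤ x₀` every term of
index `m ≥ i` may be lowered by `k (x₀ - x)`, without exceeding `P`; this yields the quotient
`Q` explicitly. Conversely, near `x₀` the polynomial `P` is the affine function given by one of
its maximal terms on each side, so the jump of its slope at `x₀` is `j - i` for two maximal
indices `i ≤ j`; a factorization forces this jump to be at least `k`, because `Q` is convex.
-/

open Filter Topology

noncomputable def tropEval (n : ℕ) (c : ℕ → ℝ) (x : ℝ) : ℝ :=
  (Finset.range (n + 1)).sup' Finset.nonempty_range_add_one (fun m => c m + (m : ℝ) * x)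

section

variable {n : ℕ} {c : ℕ → ℝ}

theorem le_tropEval {m : ℕ} (hm : m ≤ n) (x : ℝ) : c m + m * x ≤ tropEval n c x :=
  Finset.le_sup' (fun m => c m + (m : ℝ) * x) (Finset.mem_range.2 (Nat.lt_succ_of_le hm))

theorem tropEval_le {x y : ℝ} (h : ∀ m ≤ n, c m + m * x ≤ y) : tropEval n c x ≤ y :=
  Finset.sup'_le _ _ fun m hm => h m (Nat.lt_succ_iff.1 (Finset.mem_range.1 hm))

theorem exists_eq_tropEval (x : ℝ) : ∃ m ≤ n, c m + m * x = tropEval n c x := by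
  obtain ⟨m, hm, h⟩ := Finset.exists_mem_eq_sup' Finset.nonempty_range_add_one
    (fun m => c m + (m : ℝ) * x)
  exact ⟨m, Nat.lt_succ_iff.1 (Finset.mem_range.1 hm), h.symm⟩

theorem continuous_tropEval : Continuous (tropEval n c) :=
  Continuous.finset_sup'_apply _ fun _ _ => by fun_prop

theorem two_mul_tropEval_le (x t : ℝ) :
    2 * tropEval n c x ≤ tropEval n c (x + t) + tropEval n c (x - t) := by
  suffices tropEval n c x ≤ (tropEval n c (x + t) + tropEval n c (x - t)) / 2 by linarith
  refine tropEval_le fun m hm => ?_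
  have hplus := le_tropEval (c := c) hm (x + t)
  have hminus := le_tropEval (c := c) hm (x - t)
  linarith

theorem eventually_tropEval_eq (x₀ : ℝ) :
    ∀ᶠ y in 𝓝 x₀, ∃ j ≤ n, c j + j * x₀ = tropEval n c x₀ ∧
      tropEval n c y = tropEval n c x₀ + j * (y - x₀) := by
  have hstrict : ∀ m ∈ Finset.range (n + 1), ∀ᶠ y in 𝓝 x₀,
      c m + m * x₀ = tropEval n c x₀ ∨ c m + m * y < tropEval n c y := by
    intro m hm
    by_cases hmax : c m + m * x₀ = tropEval n c x₀
    · exact Eventually.of_forall fun _ => Or.inl hmax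
    · have hlt := lt_of_le_of_ne (le_tropEval (Nat.lt_succ_iff.1 (Finset.mem_range.1 hm)) x₀) hmax
      exact (ContinuousAt.eventually_lt (by fun_prop) continuous_tropEval.continuousAt hlt).mono
        fun _ => Or.inr
  filter_upwards [(eventually_all_finset _).2 hstrict] with y hy
  obtain ⟨j, hjn, hj⟩ := exists_eq_tropEval (c := c) y
  have hjmax : c j + j * x₀ = tropEval n c x₀ :=
    (hy j (Finset.mem_range.2 (Nat.lt_succ_of_le hjn))).resolve_right hj.not_lt
  exact ⟨j, hjn, hjmax, by rw [← hj, ← hjmax]; ring⟩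

theorem add_mul_le_max_of_mem_Icc {x₀ : ℝ} {i j m : ℕ}
    (hi : c i + i * x₀ = tropEval n c x₀) (hj : c j + j * x₀ = tropEval n c x₀)
    (hm : m ≤ n) (him : i ≤ m) (hmj : m ≤ j) (x : ℝ) :
    c m + m * x ≤ max (c i + i * x) (c j + j * x) := by
  have hm₀ := le_tropEval (c := c) hm x₀
  rcases le_total x x₀ with hx | hx
  · have : (m : ℝ) * (x - x₀) ≤ i * (x - x₀) :=
      mul_le_mul_of_nonpos_right (by exact_mod_cast him) (by linarith)
    exact le_max_of_le_left (by linarith)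
  · have : (m : ℝ) * (x - x₀) ≤ j * (x - x₀) :=
      mul_le_mul_of_nonneg_right (by exact_mod_cast hmj) (by linarith)
    exact le_max_of_le_right (by linarith)

theorem mul_max_add_sub_le_tropEval {x₀ : ℝ} {j m k : ℕ}
    (hj : c j + j * x₀ = tropEval n c x₀) (hjn : j ≤ n) (hmj : m + k ≤ j) (x : ℝ) :
    k * max x x₀ + (c m - k * x₀ + m * x) ≤ tropEval n c x := by
  rcases le_total x x₀ with hx | hx
  · rw [max_eq_right hx]
    linarith [le_tropEval (c := c) (by omega : m ≤ n) x]
  · rw [max_eq_left hx]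
    have hm₀ := le_tropEval (c := c) (by omega : m ≤ n) x₀
    have : ((m : ℝ) + k) * (x - x₀) ≤ j * (x - x₀) :=
      mul_le_mul_of_nonneg_right (by exact_mod_cast hmj) (by linarith)
    linarith [le_tropEval (c := c) hjn x]

theorem mul_max_add_shift_le_tropEval {x₀ : ℝ} {i m k : ℕ}
    (hi : c i + i * x₀ = tropEval n c x₀) (him : i ≤ m) (hmn : m + k ≤ n) (x : ℝ) :
    k * max x x₀ + (c (m + k) + m * x) ≤ tropEval n c x := by
  have hmk := le_tropEval (c := c) hmn x
  push_cast at hmk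
  rcases le_total x x₀ with hx | hx
  · rw [max_eq_right hx]
    have hmk₀ := le_tropEval (c := c) hmn x₀
    push_cast at hmk₀
    have : (m : ℝ) * (x - x₀) ≤ i * (x - x₀) :=
      mul_le_mul_of_nonpos_right (by exact_mod_cast him) (by linarith)
    linarith [le_tropEval (c := c) (by omega : i ≤ n) x]
  · rw [max_eq_left hx]
    linarith

/-- Coefficients of the quotient of `P` by `(x + x₀)^k`: the larger of those candidates
`c m - k x₀` (admissible when `m + k ≤ j`) and `c (m + k)` (admissible when `i ≤ m`) that are
admissible; since `i + k ≤ j`, at least one is. -/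
noncomputable def quotientCoeff (c : ℕ → ℝ) (x₀ : ℝ) (i j k m : ℕ) : ℝ :=
  if i ≤ m then if m + k ≤ j then max (c m - k * x₀) (c (m + k)) else c (m + k)
  else c m - k * x₀

theorem exists_tropEval_factor_of_root {x₀ : ℝ} {i j k : ℕ}
    (hi : c i + i * x₀ = tropEval n c x₀) (hj : c j + j * x₀ = tropEval n c x₀)
    (hjn : j ≤ n) (hij : i + k ≤ j) :
    ∃ b : ℕ → ℝ, ∀ x, tropEval n c x = k * max x x₀ + tropEval (n - k) b x := by
  set b := quotientCoeff c x₀ i j k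
  have hb_sub : ∀ m, m + k ≤ j → c m - k * x₀ ≤ b m := by
    intro m hm
    simp only [b, quotientCoeff, hm, if_true]
    split_ifs <;> simp
  have hb_shift : ∀ m, i ≤ m → c (m + k) ≤ b m := by
    intro m hm
    simp only [b, quotientCoeff, hm, if_true]
    split_ifs <;> simp
  refine ⟨b, fun x => le_antisymm ?_ ?_⟩
  · have hkx : (k : ℝ) * x ≤ k * max x x₀ := by gcongr; exact le_max_left x x₀
    have hkx₀ : (k : ℝ) * x₀ ≤ k * max x x₀ := by gcongr; exact le_max_right x x₀
    have hcover : ∀ m ≤ n, (m + k ≤ j ∨ i + k ≤ m) →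
        c m + m * x ≤ k * max x x₀ + tropEval (n - k) b x := by
      rintro m hm (hmj | him)
      · linarith [hb_sub m hmj, le_tropEval (c := b) (n := n - k) (m := m) (by omega) x]
      · obtain ⟨l, rfl⟩ : ∃ l, m = l + k := ⟨m - k, by omega⟩
        have hl := le_tropEval (c := b) (n := n - k) (m := l) (by omega) x
        push_cast
        linarith [hb_shift l (by omega)]
    refine tropEval_le fun m hm => ?_
    by_cases hmid : m + k ≤ j ∨ i + k ≤ m
    · exact hcover m hm hmid
    · refine (add_mul_le_max_of_mem_Icc hi hj hm (by omega) (by omega) x).trans (max_le ?_ ?_)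
      · exact hcover i (by omega) (Or.inl hij)
      · exact hcover j hjn (Or.inr hij)
  · suffices tropEval (n - k) b x ≤ tropEval n c x - k * max x x₀ by linarith
    refine tropEval_le fun m hm => ?_
    suffices k * max x x₀ + (b m + m * x) ≤ tropEval n c x by linarith
    simp only [b, quotientCoeff]
    split_ifs with him hmj
    · rcases max_choice (c m - k * x₀) (c (m + k)) with h | h <;> rw [h]
      · exact mul_max_add_sub_le_tropEval hj hjn hmj x
      · exact mul_max_add_shift_le_tropEval hi him (by omega) x
    · exact mul_max_add_shift_le_tropEval hi him (by omega) x
    · exact mul_max_add_sub_le_tropEval hj hjn (by omega) x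

theorem exists_tropEval_root_of_factor {n' k : ℕ} {b : ℕ → ℝ} {x₀ : ℝ}
    (h : ∀ x, tropEval n c x = k * max x x₀ + tropEval n' b x) :
    ∃ i j, i + k ≤ j ∧ j ≤ n ∧
      c i + i * x₀ = tropEval n c x₀ ∧ c j + j * x₀ = tropEval n c x₀ := by
  obtain ⟨ε, hε, hnear⟩ := Metric.eventually_nhds_iff.1 (eventually_tropEval_eq (c := c) x₀)
  set t := ε / 2
  have ht : 0 < t := half_pos hε
  obtain ⟨j, hjn, hj, hright⟩ := hnear (y := x₀ + t) (by
    rw [Real.dist_eq, add_sub_cancel_left, abs_of_pos ht]; exact half_lt_self hε)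
  obtain ⟨i, -, hi, hleft⟩ := hnear (y := x₀ - t) (by
    rw [Real.dist_eq, sub_sub_cancel_left, abs_neg, abs_of_pos ht]; exact half_lt_self hε)
  refine ⟨i, j, ?_, hjn, hi, hj⟩
  have hconv := two_mul_tropEval_le (n := n') (c := b) x₀ t
  have h₀ := h x₀
  have hr := h (x₀ + t)
  have hl := h (x₀ - t)
  rw [max_self] at h₀
  rw [max_eq_left (by linarith)] at hr
  rw [max_eq_right (by linarith)] at hl
  -- the second difference of `P` at `x₀` with step `t` is `(j - i) t`, that of `k max x x₀` is `k t`
  rw [add_sub_cancel_left] at hright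
  rw [sub_sub_cancel_left] at hleft
  have hslope : (k : ℝ) * t ≤ (j - i) * t := by linarith
  have hkji := le_of_mul_le_mul_right hslope ht
  exact_mod_cast (by linarith : (i : ℝ) + k ≤ j)

end

theorem tropical_root_order_iff_factor_general (d k : ℕ) (hk1 : 1 ≤ k)
    (a : ℕ → ℝ) (x₀ : ℝ) :
    (∃ i j : ℕ, i < j ∧ j ≤ d ∧ k ≤ j - i ∧
        a i + (i : ℝ) * x₀
          = (Finset.range (d + 1)).sup' Finset.nonempty_range_add_one
              (fun m => a m + (m : ℝ) * x₀) ∧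
        a j + (j : ℝ) * x₀
          = (Finset.range (d + 1)).sup' Finset.nonempty_range_add_one
              (fun m => a m + (m : ℝ) * x₀)) ↔
    (∃ b : ℕ → ℝ, ∀ x : ℝ,
        (Finset.range (d + 1)).sup' Finset.nonempty_range_add_one
            (fun m => a m + (m : ℝ) * x)
          = (k : ℝ) * max x x₀
            + (Finset.range (d - k + 1)).sup' Finset.nonempty_range_add_one
                (fun j => b j + (j : ℝ) * x)) := by
  constructor
  · rintro ⟨i, j, -, hjd, hij, hi, hj⟩
    exact exists_tropEval_factor_of_root (n := d) hi hj hjd (by omega)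
  · rintro ⟨b, hb⟩
    obtain ⟨i, j, hij, hjd, hi, hj⟩ := exists_tropEval_root_of_factor (n := d) hb
    exact ⟨i, j, by omega, hjd, by omega, hi, hj⟩

/-- `x₀` is a tropical root of order at least `k` of the tropical polynomial
`P(x) = max_{0 ≤ i ≤ d} (a i + i·x)` (i.e. the maximum at `x₀` is attained by two
indices at distance at least `k`) if and only if `P` factors tropically as
`(x + x₀)^k · Q(x)` with `Q` a tropical polynomial of degree `d - k`. -/
theorem tropical_root_order_iff_factor (d k : ℕ) (hd : 1 ≤ d) (hk1 : 1 ≤ k) (hkd : k ≤ d)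
    (a : ℕ → ℝ) (x₀ : ℝ) :
    (∃ i j : ℕ, i < j ∧ j ≤ d ∧ k ≤ j - i ∧
        a i + (i : ℝ) * x₀
          = (Finset.range (d + 1)).sup' Finset.nonempty_range_add_one
              (fun m => a m + (m : ℝ) * x₀) ∧
        a j + (j : ℝ) * x₀
          = (Finset.range (d + 1)).sup' Finset.nonempty_range_add_one
              (fun m => a m + (m : ℝ) * x₀)) ↔
    (∃ b : ℕ → ℝ, ∀ x : ℝ,
        (Finset.range (d + 1)).sup' Finset.nonempty_range_add_one
            (fun m => a m + (m : ℝ) * x)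
          = (k : ℝ) * max x x₀
            + (Finset.range (d - k + 1)).sup' Finset.nonempty_range_add_one
                (fun j => b j + (j : ℝ) * x)) :=
  tropical_root_order_iff_factor_general d k hk1 a x₀
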